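/- arXiv:2401.17578 — 2 statements merged into one kernel-verified Lean document; each statement's English description precedes it below -/
import Mathlib

section
/- Let X = X_1 × ⋯ × X_n where each X_i is a connected and separable topological space, and let ρ be a binary choice rule on X. If ρ has generalized L1-complexity representations (G, P, (u_E)_{E ∈ P}) and (G̃, P̃, (ũ_E)_{E ∈ P̃}), then G = G̃ and P = P̃, and there exist C > 0 and constants b_E ∈ ℝ such that ũ_E = C·u_E + b_E for every E ∈ P. -/
open Finset

variable {n : ℕ} {X : Fin n → Type*}

/-- A binary choice rule: values in [0,1] with ρ(x,y) = 1 - ρ(y,x). -/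
def IsBCR {Y : Type*} (ρ : Y → Y → ℝ) : Prop :=
  (∀ x y, ρ x y ∈ Set.Icc (0:ℝ) 1) ∧ ∀ x y, ρ x y = 1 - ρ y x

/-- A map u : X → ℝ depends only on the coordinates in E (i.e. is a map X_E → ℝ). -/
def DependsOnlyOn (E : Finset (Fin n)) (u : (∀ i, X i) → ℝ) : Prop :=
  ∀ x y : ∀ i, X i, (∀ i ∈ E, x i = y i) → u x = u y

/-- u is non-trivial as a map on X_E: it is not constant in any coordinate i ∈ E. -/
def NonTrivialOn (E : Finset (Fin n)) (u : (∀ i, X i) → ℝ) : Prop :=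
  ∀ i ∈ E, ∃ (x : ∀ i, X i) (t : X i), u (Function.update x i t) ≠ u x

/-- Generalized L1-complexity representation (G, P, (u_E)_{E ∈ P}). -/
def IsGenL1Rep [∀ i, TopologicalSpace (X i)]
    (ρ : (∀ i, X i) → (∀ i, X i) → ℝ) (G : ℝ → ℝ)
    (P : Finset (Finset (Fin n))) (u : Finset (Fin n) → (∀ i, X i) → ℝ) : Prop :=
  2 ≤ P.card ∧
  (∀ E ∈ P, E.Nonempty) ∧
  ((P : Set (Finset (Fin n))).PairwiseDisjoint id) ∧
  (∀ i : Fin n, ∃ E ∈ P, i ∈ E) ∧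
  (∀ E ∈ P, Continuous (u E)) ∧
  (∀ E ∈ P, DependsOnlyOn E (u E)) ∧
  (∀ E ∈ P, NonTrivialOn E (u E)) ∧
  ContinuousOn G (Set.Icc (-1) 1) ∧ StrictMonoOn G (Set.Icc (-1) 1) ∧
  (∀ x y : ∀ i, X i, (∑ E ∈ P, |u E x - u E y|) ≠ 0 →
    ρ x y = G ((∑ E ∈ P, u E x - ∑ E ∈ P, u E y) / ∑ E ∈ P, |u E x - u E y|)) ∧
  (∀ x y : ∀ i, X i, (∑ E ∈ P, |u E x - u E y|) = 0 → ρ x y = 1/2)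

/-!
Every ratio `r ∈ [-1, 1]` is realised by a pair differing in two blocks, so the symmetry of `ρ`
gives `G r + G (-r) = 1`, and `G 1` is the maximum of `ρ`, hence `G 1 = G̃ 1`. A pair differing
inside one block has ratio `-1`, `0` or `1`, whereas moving one coordinate in each of two blocks
by utility steps `ℓ` and `-ℓ/2` gives ratio `1/3`; injectivity of `G̃` therefore forces the two
partitions to have the same blocks. Since `G 0 = 1/2`, both total utilities represent the weak
order `ρ x y ≤ 1/2`. On the product of the (interval) ranges of two blocks this is a two-factor
additive representation: increments of `ũ_E` over equal `u_E`-steps coincide, a monotone local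
Cauchy equation makes them linear, so `ũ_E = C u_E + b_E` with a common `C > 0`. Then the
ratios computed from `u` and `ũ` agree, and `G = G̃`.
-/

section FunctionalEquations

variable {c : ℝ → ℝ} {L : ℝ}

theorem apply_natCast_mul_of_additive
    (hadd : ∀ a b, 0 ≤ a → 0 ≤ b → a + b ≤ L → c (a + b) = c a + c b)
    (k : ℕ) {μ : ℝ} (hμ : 0 ≤ μ) (hk : k * μ ≤ L) : c (k * μ) = k * c μ := by
  induction k with
  | zero =>
    have := hadd 0 0 le_rfl le_rfl (by simpa using hk)
    simp_all
  | succ k ih =>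
    push_cast at hk ⊢
    rw [add_mul, one_mul] at hk ⊢
    rw [hadd _ _ (by positivity) hμ hk, ih (by linarith), add_mul, one_mul]

theorem div_mul_le_of_additive (hL : 0 < L)
    (hadd : ∀ a b, 0 ≤ a → 0 ≤ b → a + b ≤ L → c (a + b) = c a + c b)
    (hnonneg : ∀ a, 0 ≤ a → a ≤ L → 0 ≤ c a) {δ : ℝ} (h0 : 0 ≤ δ) (hδ : δ ≤ L) :
    c L / L * δ ≤ c δ := by
  refine le_of_forall_pos_le_add fun ε hε => ?_
  obtain ⟨N, hN⟩ := exists_nat_gt (c L / ε)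
  have hN0 : (0 : ℝ) < N := lt_of_le_of_lt (div_nonneg (hnonneg L hL.le le_rfl) hε.le) hN
  set μ := L / N
  have hμ : 0 < μ := div_pos hL hN0
  have hcL : c L = N * c μ := by
    rw [← apply_natCast_mul_of_additive hadd N hμ.le (by simp [μ, mul_div_cancel₀ _ hN0.ne'])]
    simp [μ, mul_div_cancel₀ _ hN0.ne']
  -- the grid point `k * μ` just below `δ`
  set k := ⌊δ / μ⌋₊
  have hkμ : k * μ ≤ δ := (le_div_iff₀ hμ).1 (Nat.floor_le (div_nonneg h0 hμ.le))
  have hk : δ / μ < k + 1 := Nat.lt_floor_add_one _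
  have hcμ : 0 ≤ c μ := hnonneg μ hμ.le (div_le_self hL.le (by exact_mod_cast hN0))
  have hmono : c (k * μ) ≤ c δ := by
    have : 0 ≤ k * μ := by positivity
    have := hadd (k * μ) (δ - k * μ) (by positivity) (by linarith) (by linarith)
    rw [add_sub_cancel] at this
    linarith [hnonneg (δ - k * μ) (by linarith) (by linarith)]
  rw [apply_natCast_mul_of_additive hadd k hμ.le (by linarith)] at hmono
  have hε' : c μ < ε := by
    rw [hcL, div_lt_iff₀ hε] at hN
    nlinarith
  have : c L / L * δ = δ / μ * c μ := by
    rw [hcL, show L = N * μ by simp [μ, mul_div_cancel₀ _ hN0.ne']]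
    field_simp
  rw [this]
  nlinarith

theorem eq_div_mul_of_additive (hL : 0 < L)
    (hadd : ∀ a b, 0 ≤ a → 0 ≤ b → a + b ≤ L → c (a + b) = c a + c b)
    (hnonneg : ∀ a, 0 ≤ a → a ≤ L → 0 ≤ c a) {δ : ℝ} (h0 : 0 ≤ δ) (hδ : δ ≤ L) :
    c δ = c L / L * δ := by
  have hle := div_mul_le_of_additive hL hadd hnonneg h0 hδ
  have hle' := div_mul_le_of_additive hL hadd hnonneg (sub_nonneg.2 hδ) (sub_le_self L h0)
  have hsum := hadd δ (L - δ) h0 (by linarith) (by linarith)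
  rw [add_sub_cancel] at hsum
  have : c L / L * (L - δ) = c L - c L / L * δ := by field_simp
  linarith

theorem sub_eq_mul_sub_of_forall_sub_le {K : Set ℝ} (hK : K.OrdConnected) {F : ℝ → ℝ} {C : ℝ}
    (hL : 0 < L) (hstep : ∀ a ∈ K, ∀ b ∈ K, a ≤ b → b - a ≤ L → F b - F a = C * (b - a))
    {a b : ℝ} (ha : a ∈ K) (hb : b ∈ K) : F b - F a = C * (b - a) := by
  wlog hab : a ≤ b generalizing a b
  · linarith [this hb ha (le_of_not_ge hab)]
  -- telescope along `N` equal steps of length `h ≤ L`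
  obtain ⟨N, hN⟩ := exists_nat_gt ((b - a) / L)
  have hN0 : (0 : ℝ) < N := lt_of_le_of_lt (div_nonneg (sub_nonneg.2 hab) hL.le) hN
  set h := (b - a) / N
  have hh : 0 ≤ h := div_nonneg (sub_nonneg.2 hab) hN0.le
  have hhL : h ≤ L := by
    rw [div_lt_iff₀ hL] at hN
    rw [div_le_iff₀ hN0]; linarith
  have hNh : a + N * h = b := by simp only [h]; field_simp; ring
  have hmem : ∀ k : ℕ, k ≤ N → a + k * h ∈ K := fun k hk =>
    hK.out ha hb ⟨by nlinarith, by rw [← hNh]; gcongr⟩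
  have hsteps : ∀ k ∈ Finset.range N, F (a + (k + 1 : ℕ) * h) - F (a + k * h) = C * h :=
    fun k hk => by
      rw [hstep _ (hmem k (Finset.mem_range.1 hk).le) _ (hmem (k + 1) (Finset.mem_range.1 hk))
        (by push_cast; nlinarith) (by push_cast; linarith)]
      push_cast; ring
  have := Finset.sum_range_sub (fun k : ℕ => F (a + k * h)) N
  rw [Finset.sum_congr rfl hsteps, Finset.sum_const, Finset.card_range, nsmul_eq_mul] at this
  simp only [Nat.cast_zero, zero_mul, add_zero, hNh] at this
  rw [← this, ← hNh]; ring

theorem exists_pos_slope_of_sub_eq_sub {I J : Set ℝ} (hI : I.OrdConnected)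
    (hJ : J.OrdConnected) {p q p' q' : ℝ} (hp : p ∈ I) (hq : q ∈ I) (hpq : p < q)
    (hp' : p' ∈ J) (hq' : q' ∈ J) (hpq' : p' < q') {f g : ℝ → ℝ}
    (hincr : ∀ s ∈ I, ∀ s' ∈ I, ∀ t ∈ J, ∀ t' ∈ J, s' - s = t' - t → f s' - f s = g t' - g t)
    (hg : StrictMonoOn g J) :
    ∃ C, 0 < C ∧ (∀ s ∈ I, ∀ s' ∈ I, f s' - f s = C * (s' - s)) ∧
      ∀ t ∈ J, ∀ t' ∈ J, g t' - g t = C * (t' - t) := by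
  set L := min (q - p) (q' - p')
  have hL : 0 < L := lt_min (by linarith) (by linarith)
  have hLq : L ≤ q - p := min_le_left _ _
  have hLq' : L ≤ q' - p' := min_le_right _ _
  have hmemI : ∀ δ, 0 ≤ δ → δ ≤ L → p + δ ∈ I := fun δ h0 hδ =>
    hI.out hp hq ⟨by linarith, by linarith⟩
  have hmemJ : ∀ δ, 0 ≤ δ → δ ≤ L → p' + δ ∈ J := fun δ h0 hδ =>
    hJ.out hp' hq' ⟨by linarith, by linarith⟩
  -- both `f` and `g` increase by `c δ` over any step of length `δ ≤ L`
  set c := fun δ => g (p' + δ) - g p'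
  have hf_step : ∀ s ∈ I, ∀ s' ∈ I, s ≤ s' → s' - s ≤ L → f s' - f s = c (s' - s) :=
    fun s hs s' hs' h hL' => hincr s hs s' hs' p' hp' _ (hmemJ _ (by linarith) hL') (by ring)
  have hg_step : ∀ t ∈ J, ∀ t' ∈ J, t ≤ t' → t' - t ≤ L → g t' - g t = c (t' - t) :=
    fun t ht t' ht' h hL' => by
      have hmem := hmemI _ (by linarith) hL'
      rw [← hincr p hp _ hmem t ht t' ht' (by ring),
        hf_step p hp _ hmem (by linarith) (by linarith), add_sub_cancel_left]
  have hadd : ∀ a b, 0 ≤ a → 0 ≤ b → a + b ≤ L → c (a + b) = c a + c b := fun a b ha hb hab => by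
    have := hg_step (p' + a) (hmemJ a ha (by linarith)) (p' + (a + b)) (hmemJ _ (by linarith) hab)
      (by linarith) (by linarith)
    simp only [c, add_sub_add_left_eq_sub, add_sub_cancel_left] at this ⊢
    linarith
  have hnonneg : ∀ δ, 0 ≤ δ → δ ≤ L → 0 ≤ c δ := fun δ h0 hδ =>
    sub_nonneg.2 (hg.monotoneOn hp' (hmemJ δ h0 hδ) (by linarith))
  have hcL : 0 < c L := sub_pos.2 (hg hp' (hmemJ L hL.le le_rfl) (by linarith))
  have hlin := fun δ => eq_div_mul_of_additive (c := c) hL hadd hnonneg (δ := δ)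
  refine ⟨c L / L, div_pos hcL hL, fun s hs s' hs' => ?_, fun t ht t' ht' => ?_⟩
  · refine sub_eq_mul_sub_of_forall_sub_le hI hL (fun s hs s' hs' h hL' => ?_) hs hs'
    rw [hf_step s hs s' hs' h hL', hlin _ (sub_nonneg.2 h) hL']
  · refine sub_eq_mul_sub_of_forall_sub_le hJ hL (fun t ht t' ht' h hL' => ?_) ht ht'
    rw [hg_step t ht t' ht' h hL', hlin _ (sub_nonneg.2 h) hL']

theorem exists_pos_slope_of_add_le_add_iff {A B : Type*} {f₁ f₂ : A → ℝ} {g₁ g₂ : B → ℝ}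
    (hf : (Set.range f₁).OrdConnected) (hg : (Set.range g₁).OrdConnected) {a₁ a₂ : A}
    (ha : f₁ a₁ < f₁ a₂) {b₁ b₂ : B} (hb : g₁ b₁ < g₁ b₂)
    (H : ∀ a a' b b', f₁ a + g₁ b ≤ f₁ a' + g₁ b' ↔ f₂ a + g₂ b ≤ f₂ a' + g₂ b') :
    ∃ C, 0 < C ∧ (∀ a a', f₂ a' - f₂ a = C * (f₁ a' - f₁ a)) ∧
      ∀ b b', g₂ b' - g₂ b = C * (g₁ b' - g₁ b) := by
  have hfac : f₂.FactorsThrough f₁ := fun a a' h => by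
    have h₁ := (H a a' b₁ b₁).1 (by rw [h])
    have h₂ := (H a' a b₁ b₁).1 (by rw [h])
    linarith
  have hgac : g₂.FactorsThrough g₁ := fun b b' h => by
    have h₁ := (H a₁ a₁ b b').1 (by rw [h])
    have h₂ := (H a₁ a₁ b' b).1 (by rw [h])
    linarith
  obtain ⟨C, hC, hfC, hgC⟩ := exists_pos_slope_of_sub_eq_sub (f := Function.extend f₁ f₂ 0)
    (g := Function.extend g₁ g₂ 0) hf hg ⟨a₁, rfl⟩ ⟨a₂, rfl⟩ ha ⟨b₁, rfl⟩ ⟨b₂, rfl⟩ hb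
    (by
      rintro _ ⟨a, rfl⟩ _ ⟨a', rfl⟩ _ ⟨b, rfl⟩ _ ⟨b', rfl⟩ h
      rw [hfac.extend_apply, hfac.extend_apply, hgac.extend_apply, hgac.extend_apply]
      have h₁ := (H a' a b b').1 (by linarith)
      have h₂ := (H a a' b' b).1 (by linarith)
      linarith)
    (by
      rintro _ ⟨b, rfl⟩ _ ⟨b', rfl⟩ h
      rw [hgac.extend_apply, hgac.extend_apply]
      by_contra hle
      linarith [(H a₁ a₁ b' b).2 (by linarith)])
  refine ⟨C, hC, fun a a' => ?_, fun b b' => ?_⟩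
  · simpa only [hfac.extend_apply] using hfC _ ⟨a, rfl⟩ _ ⟨a', rfl⟩
  · simpa only [hgac.extend_apply] using hgC _ ⟨b, rfl⟩ _ ⟨b', rfl⟩

end FunctionalEquations

theorem DependsOnlyOn.apply_piecewise_of_subset {E S : Finset (Fin n)} {w : (∀ i, X i) → ℝ}
    (hw : DependsOnlyOn E w) (hES : E ⊆ S) (a b : ∀ i, X i) : w (S.piecewise a b) = w a :=
  hw _ _ fun _ hi => S.piecewise_eq_of_mem _ _ (hES hi)

theorem DependsOnlyOn.apply_piecewise_of_disjoint {E S : Finset (Fin n)} {w : (∀ i, X i) → ℝ}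
    (hw : DependsOnlyOn E w) (hES : Disjoint E S) (a b : ∀ i, X i) : w (S.piecewise a b) = w b :=
  hw _ _ fun _ hi => S.piecewise_eq_of_notMem _ _ (Finset.disjoint_left.1 hES hi)

theorem sum_comp_sub_piecewise {P : Finset (Finset (Fin n))} {w : Finset (Fin n) → (∀ i, X i) → ℝ}
    (hdisj : (P : Set (Finset (Fin n))).PairwiseDisjoint id)
    (hdep : ∀ E ∈ P, DependsOnlyOn E (w E)) {E F : Finset (Fin n)} (hE : E ∈ P) (hF : F ∈ P)
    (hEF : E ≠ F) (a a' b b' c : ∀ i, X i) (φ : ℝ → ℝ) (hφ : φ 0 = 0) :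
    ∑ E' ∈ P, φ (w E' (E.piecewise a (F.piecewise b c)) - w E' (E.piecewise a' (F.piecewise b' c)))
      = φ (w E a - w E a') + φ (w F b - w F b') := by
  have hother : ∀ E' ∈ P, ∀ S ∈ P, E' ≠ S → ∀ a b : ∀ i, X i,
      w E' (S.piecewise a b) = w E' b := fun E' hE' S hS hne =>
    (hdep E' hE').apply_piecewise_of_disjoint (hdisj hE' hS hne)
  have hown : ∀ S ∈ P, ∀ a b : ∀ i, X i, w S (S.piecewise a b) = w S a := fun S hS =>
    (hdep S hS).apply_piecewise_of_subset subset_rfl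
  rw [Finset.sum_eq_add_of_mem E F hE hF hEF fun E' hE' ⟨hE'E, hE'F⟩ => by
    rw [hother E' hE' E hE hE'E, hother E' hE' E hE hE'E, hother E' hE' F hF hE'F,
      hother E' hE' F hF hE'F, sub_self, hφ]]
  rw [hown E hE, hown E hE, hother F hF E hE hEF.symm, hother F hF E hE hEF.symm, hown F hF,
    hown F hF]

theorem sum_div_sum_abs_mem_Icc {ι : Type*} (s : Finset ι) (f : ι → ℝ) :
    (∑ i ∈ s, f i) / ∑ i ∈ s, |f i| ∈ Set.Icc (-1 : ℝ) 1 := by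
  have hnonneg : 0 ≤ ∑ i ∈ s, |f i| := Finset.sum_nonneg fun i _ => abs_nonneg (f i)
  rw [Set.mem_Icc, ← abs_le, abs_div, abs_of_nonneg hnonneg]
  exact div_le_one_of_le₀ (Finset.abs_sum_le_sum_abs f s) hnonneg

theorem subset_of_forall_exists_mem_mem {α : Type*} {P Q : Finset (Finset α)}
    (hP : ∀ E ∈ P, E.Nonempty) (hPd : (P : Set (Finset α)).PairwiseDisjoint id)
    (hQd : (Q : Set (Finset α)).PairwiseDisjoint id) (hQ : ∀ i, ∃ F ∈ Q, i ∈ F)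
    (hPQ : ∀ E ∈ P, ∀ i ∈ E, ∀ j ∈ E, ∃ F ∈ Q, i ∈ F ∧ j ∈ F)
    (hQP : ∀ F ∈ Q, ∀ i ∈ F, ∀ j ∈ F, ∃ E ∈ P, i ∈ E ∧ j ∈ E) : P ⊆ Q := by
  intro E hE
  obtain ⟨i, hi⟩ := hP E hE
  obtain ⟨F, hF, hiF⟩ := hQ i
  suffices E = F from this ▸ hF
  ext j
  constructor
  · intro hj
    obtain ⟨F', hF', hiF', hjF'⟩ := hPQ E hE i hi j hj
    rwa [hQd.elim_finset hF hF' i hiF hiF']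
  · intro hj
    obtain ⟨E', hE', hiE', hjE'⟩ := hQP F hF i hiF j hj
    rwa [hPd.elim_finset hE hE' i hi hiE']

namespace IsGenL1Rep

variable [∀ i, TopologicalSpace (X i)] {ρ : (∀ i, X i) → (∀ i, X i) → ℝ} {G Gt : ℝ → ℝ}
  {P Pt : Finset (Finset (Fin n))} {u ut : Finset (Fin n) → (∀ i, X i) → ℝ}

theorem two_le_card (h : IsGenL1Rep ρ G P u) : 2 ≤ P.card := h.1

theorem nonempty (h : IsGenL1Rep ρ G P u) : ∀ E ∈ P, E.Nonempty := h.2.1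

theorem pairwiseDisjoint (h : IsGenL1Rep ρ G P u) :
    (P : Set (Finset (Fin n))).PairwiseDisjoint id := h.2.2.1

theorem exists_mem (h : IsGenL1Rep ρ G P u) : ∀ i, ∃ E ∈ P, i ∈ E := h.2.2.2.1

theorem continuous (h : IsGenL1Rep ρ G P u) : ∀ E ∈ P, Continuous (u E) := h.2.2.2.2.1

theorem dependsOnlyOn (h : IsGenL1Rep ρ G P u) : ∀ E ∈ P, DependsOnlyOn E (u E) := h.2.2.2.2.2.1

theorem nonTrivialOn (h : IsGenL1Rep ρ G P u) : ∀ E ∈ P, NonTrivialOn E (u E) :=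
  h.2.2.2.2.2.2.1

theorem strictMonoOn (h : IsGenL1Rep ρ G P u) : StrictMonoOn G (Set.Icc (-1) 1) :=
  h.2.2.2.2.2.2.2.2.1

theorem choice_eq (h : IsGenL1Rep ρ G P u) {x y : ∀ i, X i}
    (hd : ∑ E ∈ P, |u E x - u E y| ≠ 0) :
    ρ x y = G ((∑ E ∈ P, (u E x - u E y)) / ∑ E ∈ P, |u E x - u E y|) := by
  rw [sum_sub_distrib]
  exact h.2.2.2.2.2.2.2.2.2.1 x y hd

theorem choice_eq_half (h : IsGenL1Rep ρ G P u) {x y : ∀ i, X i}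
    (hd : ∑ E ∈ P, |u E x - u E y| = 0) : ρ x y = 1 / 2 :=
  h.2.2.2.2.2.2.2.2.2.2 x y hd

theorem choice_piecewise (h : IsGenL1Rep ρ G P u) {E F : Finset (Fin n)} (hE : E ∈ P)
    (hF : F ∈ P) (hEF : E ≠ F) (a a' b b' c : ∀ i, X i)
    (hd : |u E a - u E a'| + |u F b - u F b'| ≠ 0) :
    ρ (E.piecewise a (F.piecewise b c)) (E.piecewise a' (F.piecewise b' c)) =
      G ((u E a - u E a' + (u F b - u F b')) / (|u E a - u E a'| + |u F b - u F b'|)) := by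
  have hsum := sum_comp_sub_piecewise h.pairwiseDisjoint h.dependsOnlyOn hE hF hEF a a' b b' c
  rw [h.choice_eq (by rwa [hsum _ abs_zero]), hsum _ abs_zero, hsum (fun t => t) rfl]

theorem exists_update_lt (h : IsGenL1Rep ρ G P u) {E : Finset (Fin n)} (hE : E ∈ P) {i : Fin n}
    (hi : i ∈ E) : ∃ (a : ∀ k, X k) (s₁ s₂ : X i),
      u E (Function.update a i s₁) < u E (Function.update a i s₂) := by
  obtain ⟨a, s, hne⟩ := h.nonTrivialOn E hE i hi
  rw [← congrArg (u E) (Function.update_eq_self i a)] at hne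
  rcases hne.lt_or_gt with hlt | hlt
  exacts [⟨_, _, _, hlt⟩, ⟨_, _, _, hlt⟩]

theorem exists_apply_lt (h : IsGenL1Rep ρ G P u) {E : Finset (Fin n)} (hE : E ∈ P) :
    ∃ a b, u E a < u E b := by
  obtain ⟨i, hi⟩ := h.nonempty E hE
  obtain ⟨a, s₁, s₂, hlt⟩ := h.exists_update_lt hE hi
  exact ⟨_, _, hlt⟩

theorem choice_mem_of_eqOn_compl (h : IsGenL1Rep ρ G P u) {E : Finset (Fin n)} (hE : E ∈ P)
    {x y : ∀ i, X i} (hxy : ∀ k ∉ E, x k = y k) :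
    ρ x y = 1 / 2 ∨ ρ x y = G 1 ∨ ρ x y = G (-1) := by
  have hsum : ∀ φ : ℝ → ℝ, φ 0 = 0 → ∑ E' ∈ P, φ (u E' x - u E' y) = φ (u E x - u E y) :=
    fun φ hφ => Finset.sum_eq_single_of_mem E hE fun E' hE' hne => by
      rw [h.dependsOnlyOn E' hE' x y fun k hk =>
        hxy k (Finset.disjoint_left.1 (h.pairwiseDisjoint hE' hE hne) hk), sub_self, hφ]
  rcases lt_trichotomy (u E x - u E y) 0 with hlt | heq | hgt
  · refine Or.inr (Or.inr ?_)
    rw [h.choice_eq (by rw [hsum _ abs_zero]; exact abs_ne_zero.2 hlt.ne), hsum _ abs_zero,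
      hsum (fun t => t) rfl, abs_of_neg hlt, div_neg, div_self hlt.ne]
  · exact Or.inl (h.choice_eq_half (by rw [hsum _ abs_zero, heq, abs_zero]))
  · refine Or.inr (Or.inl ?_)
    rw [h.choice_eq (by rw [hsum _ abs_zero]; exact abs_ne_zero.2 hgt.ne'), hsum _ abs_zero,
      hsum (fun t => t) rfl, abs_of_pos hgt, div_self hgt.ne']

section Connected

variable [∀ i, ConnectedSpace (X i)]

theorem ordConnected_range (h : IsGenL1Rep ρ G P u) {E : Finset (Fin n)} (hE : E ∈ P) :
    (Set.range (u E)).OrdConnected :=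
  (isPreconnected_range (h.continuous E hE)).ordConnected

theorem exists_ratio_eq (h : IsGenL1Rep ρ G P u) {r : ℝ} (hr : r ∈ Set.Icc (-1 : ℝ) 1) :
    ∃ x y : ∀ i, X i, ∑ E ∈ P, |u E x - u E y| ≠ 0 ∧
      (∑ E ∈ P, (u E x - u E y)) / ∑ E ∈ P, |u E x - u E y| = r := by
  obtain ⟨hr₁, hr₂⟩ := hr
  obtain ⟨E, hE, F, hF, hEF⟩ := Finset.one_lt_card.1 h.two_le_card
  obtain ⟨a, a', ha⟩ := h.exists_apply_lt hE
  obtain ⟨b, b', hb⟩ := h.exists_apply_lt hF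
  set ℓ := min (u E a' - u E a) (u F b' - u F b)
  have hℓ : 0 < ℓ := lt_min (sub_pos.2 ha) (sub_pos.2 hb)
  have hℓE : ℓ ≤ u E a' - u E a := min_le_left _ _
  have hℓF : ℓ ≤ u F b' - u F b := min_le_right _ _
  -- block differences `(1 + r) ℓ / 2` and `-(1 - r) ℓ / 2` give the ratio `r`
  obtain ⟨a₁, ha₁⟩ : u E a + (1 + r) * ℓ / 2 ∈ Set.range (u E) :=
    (h.ordConnected_range hE).out ⟨a, rfl⟩ ⟨a', rfl⟩ ⟨by nlinarith, by nlinarith⟩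
  obtain ⟨b₁, hb₁⟩ : u F b + (1 - r) * ℓ / 2 ∈ Set.range (u F) :=
    (h.ordConnected_range hF).out ⟨b, rfl⟩ ⟨b', rfl⟩ ⟨by nlinarith, by nlinarith⟩
  have hsum := sum_comp_sub_piecewise h.pairwiseDisjoint h.dependsOnlyOn hE hF hEF a₁ a b b₁ a
  have habs : |u E a₁ - u E a| + |u F b - u F b₁| = ℓ := by
    rw [ha₁, hb₁, abs_of_nonneg (by nlinarith), abs_of_nonpos (by nlinarith)]
    ring
  refine ⟨E.piecewise a₁ (F.piecewise b a), E.piecewise a (F.piecewise b₁ a), ?_, ?_⟩ <;>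
    rw [hsum _ abs_zero, habs]
  · exact hℓ.ne'
  · rw [hsum (fun t => t) rfl, ha₁, hb₁]
    field_simp
    ring

theorem G_add_G_neg (hρ : IsBCR ρ) (h : IsGenL1Rep ρ G P u) {r : ℝ}
    (hr : r ∈ Set.Icc (-1 : ℝ) 1) : G r + G (-r) = 1 := by
  obtain ⟨x, y, hd, hratio⟩ := h.exists_ratio_eq hr
  have hxy := h.choice_eq hd
  have hyx := h.choice_eq (x := y) (y := x) (by simpa only [abs_sub_comm] using hd)
  simp only [← neg_sub (u _ x), abs_neg, Finset.sum_neg_distrib, neg_div] at hyx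
  rw [hratio] at hxy hyx
  linarith [hρ.2 x y]

theorem G_zero (hρ : IsBCR ρ) (h : IsGenL1Rep ρ G P u) : G 0 = 1 / 2 := by
  have := h.G_add_G_neg hρ (r := 0) (by norm_num)
  rw [neg_zero] at this
  linarith

theorem choice_le_G_one (hρ : IsBCR ρ) (h : IsGenL1Rep ρ G P u) (x y : ∀ i, X i) :
    ρ x y ≤ G 1 := by
  by_cases hd : ∑ E ∈ P, |u E x - u E y| = 0
  · rw [h.choice_eq_half hd, ← h.G_zero hρ]
    exact h.strictMonoOn.monotoneOn (by norm_num) (by norm_num) zero_le_one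
  · rw [h.choice_eq hd]
    have hmem := sum_div_sum_abs_mem_Icc P fun E => u E x - u E y
    exact h.strictMonoOn.monotoneOn hmem (by norm_num) hmem.2

theorem sum_sub_nonpos_iff (hρ : IsBCR ρ) (h : IsGenL1Rep ρ G P u) (x y : ∀ i, X i) :
    ∑ E ∈ P, (u E x - u E y) ≤ 0 ↔ ρ x y ≤ 1 / 2 := by
  by_cases hd : ∑ E ∈ P, |u E x - u E y| = 0
  · have : ∑ E ∈ P, (u E x - u E y) = 0 :=
      abs_nonpos_iff.1 (hd ▸ Finset.abs_sum_le_sum_abs _ _)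
    simp [this, h.choice_eq_half hd]
  · have hpos : 0 < ∑ E ∈ P, |u E x - u E y| :=
      lt_of_le_of_ne (Finset.sum_nonneg fun _ _ => abs_nonneg _) (Ne.symm hd)
    rw [h.choice_eq hd, ← h.G_zero hρ,
      h.strictMonoOn.le_iff_le (sum_div_sum_abs_mem_Icc _ _) (by norm_num), div_le_iff₀ hpos,
      zero_mul]

theorem exists_choice_eq_G_third (h : IsGenL1Rep ρ G P u) {E F : Finset (Fin n)} (hE : E ∈ P)
    (hF : F ∈ P) (hEF : E ≠ F) {i j : Fin n} (hi : i ∈ E) (hj : j ∈ F) :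
    ∃ x y : ∀ k, X k, (∀ k, k ≠ i → k ≠ j → x k = y k) ∧ ρ x y = G (1 / 3) := by
  obtain ⟨a, s₁, s₂, hs⟩ := h.exists_update_lt hE hi
  obtain ⟨b, t₁, t₂, ht⟩ := h.exists_update_lt hF hj
  have hrange : ∀ E ∈ P, ∀ (a : ∀ k, X k) (i : Fin n),
      (Set.range fun s => u E (Function.update a i s)).OrdConnected := fun E hE a i =>
    (isPreconnected_range ((h.continuous E hE).comp
      (continuous_const.update i continuous_id))).ordConnected
  set ℓ := min (u E (Function.update a i s₂) - u E (Function.update a i s₁))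
    (u F (Function.update b j t₂) - u F (Function.update b j t₁))
  have hℓ : 0 < ℓ := lt_min (sub_pos.2 hs) (sub_pos.2 ht)
  have hℓE : ℓ ≤ _ := min_le_left _ _
  have hℓF : ℓ ≤ _ := min_le_right _ _
  -- block differences `ℓ` and `-ℓ/2` give the ratio `1/3`
  obtain ⟨s, hs'⟩ : u E (Function.update a i s₁) + ℓ ∈
      Set.range fun s => u E (Function.update a i s) :=
    (hrange E hE a i).out ⟨s₁, rfl⟩ ⟨s₂, rfl⟩ ⟨by linarith, by linarith⟩
  obtain ⟨t, ht'⟩ : u F (Function.update b j t₁) + ℓ / 2 ∈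
      Set.range fun t => u F (Function.update b j t) :=
    (hrange F hF b j).out ⟨t₁, rfl⟩ ⟨t₂, rfl⟩ ⟨by linarith, by linarith⟩
  refine ⟨E.piecewise (Function.update a i s) (F.piecewise (Function.update b j t₁) a),
    E.piecewise (Function.update a i s₁) (F.piecewise (Function.update b j t) a),
    fun k hki hkj => ?_, ?_⟩
  · simp only [Finset.piecewise, Function.update_of_ne hki, Function.update_of_ne hkj]
  · have hΔE : u E (Function.update a i s) - u E (Function.update a i s₁) = ℓ := by
      simp only at hs'; linarith
    have hΔF : u F (Function.update b j t₁) - u F (Function.update b j t) = -(ℓ / 2) := by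
      simp only at ht'; linarith
    rw [h.choice_piecewise hE hF hEF _ _ _ _ _ (by rw [hΔE]; positivity), hΔE, hΔF, abs_neg,
      abs_of_pos hℓ, abs_of_pos (half_pos hℓ)]
    congr 1
    field_simp
    norm_num

theorem G_one_eq (hρ : IsBCR ρ) (h1 : IsGenL1Rep ρ G P u)
    (h2 : IsGenL1Rep ρ Gt Pt ut) : G 1 = Gt 1 := by
  obtain ⟨x, y, hd, hr⟩ := h1.exists_ratio_eq (r := 1) (by norm_num)
  obtain ⟨x', y', hd', hr'⟩ := h2.exists_ratio_eq (r := 1) (by norm_num)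
  refine le_antisymm ?_ ?_
  · calc G 1 = ρ x y := by rw [h1.choice_eq hd, hr]
      _ ≤ Gt 1 := h2.choice_le_G_one hρ x y
  · calc Gt 1 = ρ x' y' := by rw [h2.choice_eq hd', hr']
      _ ≤ G 1 := h1.choice_le_G_one hρ x' y'

theorem exists_mem_mem (hρ : IsBCR ρ) (h1 : IsGenL1Rep ρ G P u)
    (h2 : IsGenL1Rep ρ Gt Pt ut) {E : Finset (Fin n)} (hE : E ∈ P) {i j : Fin n} (hi : i ∈ E)
    (hj : j ∈ E) : ∃ F ∈ Pt, i ∈ F ∧ j ∈ F := by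
  obtain ⟨Et, hEt, hiEt⟩ := h2.exists_mem i
  obtain ⟨Ft, hFt, hjFt⟩ := h2.exists_mem j
  by_cases hEFt : Et = Ft
  · exact ⟨Et, hEt, hiEt, hEFt ▸ hjFt⟩
  exfalso
  obtain ⟨x, y, hxy, hρxy⟩ := h2.exists_choice_eq_G_third hEt hFt hEFt hiEt hjFt
  have hne : ∀ r ∈ Set.Icc (-1 : ℝ) 1, r ≠ 1 / 3 → ρ x y ≠ Gt r := fun r hr hr3 hG =>
    hr3 (h2.strictMonoOn.injOn hr (by norm_num) (hG.symm.trans hρxy))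
  have hG1 := h1.G_one_eq hρ h2
  have hGm1 := h1.G_add_G_neg hρ (r := 1) (by norm_num)
  have hGtm1 := h2.G_add_G_neg hρ (r := 1) (by norm_num)
  rcases h1.choice_mem_of_eqOn_compl hE (x := x) (y := y)
    (fun k hk => hxy k (fun hki => hk (hki ▸ hi)) (fun hkj => hk (hkj ▸ hj))) with h | h | h
  · exact hne 0 (by norm_num) (by norm_num) (h.trans (h2.G_zero hρ).symm)
  · exact hne 1 (by norm_num) (by norm_num) (h.trans hG1)
  · exact hne (-1) (by norm_num) (by norm_num) (by rw [h]; linarith)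

theorem partition_eq (hρ : IsBCR ρ) (h1 : IsGenL1Rep ρ G P u)
    (h2 : IsGenL1Rep ρ Gt Pt ut) : P = Pt :=
  (subset_of_forall_exists_mem_mem h1.nonempty h1.pairwiseDisjoint h2.pairwiseDisjoint
    h2.exists_mem (fun _ hE _ hi _ hj => h1.exists_mem_mem hρ h2 hE hi hj)
    (fun _ hF _ hi _ hj => h2.exists_mem_mem hρ h1 hF hi hj)).antisymm
  (subset_of_forall_exists_mem_mem h2.nonempty h2.pairwiseDisjoint h1.pairwiseDisjoint
    h1.exists_mem (fun _ hF _ hi _ hj => h2.exists_mem_mem hρ h1 hF hi hj)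
    (fun _ hE _ hi _ hj => h1.exists_mem_mem hρ h2 hE hi hj))

theorem exists_pos_slope (h : IsGenL1Rep ρ G P u)
    (hdep : ∀ E ∈ P, DependsOnlyOn E (ut E))
    (horder : ∀ x y, ∑ E ∈ P, (u E x - u E y) ≤ 0 ↔ ∑ E ∈ P, (ut E x - ut E y) ≤ 0) :
    ∃ C, 0 < C ∧ ∀ E ∈ P, ∀ x x', ut E x' - ut E x = C * (u E x' - u E x) := by
  have hpair : ∀ E ∈ P, ∀ F ∈ P, E ≠ F → ∃ C, 0 < C ∧
      (∀ x x', ut E x' - ut E x = C * (u E x' - u E x)) ∧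
      ∀ x x', ut F x' - ut F x = C * (u F x' - u F x) := by
    intro E hE F hF hEF
    obtain ⟨a₁, a₂, ha⟩ := h.exists_apply_lt hE
    obtain ⟨b₁, b₂, hb⟩ := h.exists_apply_lt hF
    refine exists_pos_slope_of_add_le_add_iff (h.ordConnected_range hE)
      (h.ordConnected_range hF) ha hb fun a a' b b' => ?_
    have := horder (E.piecewise a (F.piecewise b a)) (E.piecewise a' (F.piecewise b' a))
    rwa [sum_comp_sub_piecewise h.pairwiseDisjoint h.dependsOnlyOn hE hF hEF _ _ _ _ _
        (fun t => t) rfl, sum_comp_sub_piecewise h.pairwiseDisjoint hdep hE hF hEF _ _ _ _ _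
        (fun t => t) rfl, ← add_sub_add_comm, sub_nonpos, ← add_sub_add_comm, sub_nonpos] at this
  obtain ⟨E₀, hE₀, F₀, hF₀, hne⟩ := Finset.one_lt_card.1 h.two_le_card
  obtain ⟨C, hC, hE₀C, -⟩ := hpair E₀ hE₀ F₀ hF₀ hne
  refine ⟨C, hC, fun E hE => ?_⟩
  rcases eq_or_ne E E₀ with rfl | hEE₀
  · exact hE₀C
  obtain ⟨C', -, hEC', hE₀C'⟩ := hpair E hE E₀ hE₀ hEE₀
  obtain ⟨a₁, a₂, ha⟩ := h.exists_apply_lt hE₀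
  have : C' = C := mul_right_cancel₀ (sub_pos.2 ha).ne' ((hE₀C' a₁ a₂).symm.trans (hE₀C a₁ a₂))
  rwa [this] at hEC'

theorem eqOn_of_sub_eq_mul_sub (h1 : IsGenL1Rep ρ G P u) (h2 : IsGenL1Rep ρ Gt P ut)
    {C : ℝ} (hC : 0 < C) (hslope : ∀ E ∈ P, ∀ x x', ut E x' - ut E x = C * (u E x' - u E x)) :
    Set.EqOn G Gt (Set.Icc (-1) 1) := by
  intro r hr
  obtain ⟨x, y, hd, hratio⟩ := h1.exists_ratio_eq hr
  have hΔ : ∀ E ∈ P, ut E x - ut E y = C * (u E x - u E y) := fun E hE => hslope E hE y x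
  have habs : ∑ E ∈ P, |ut E x - ut E y| = C * ∑ E ∈ P, |u E x - u E y| := by
    rw [Finset.mul_sum]
    exact Finset.sum_congr rfl fun E hE => by rw [hΔ E hE, abs_mul, abs_of_pos hC]
  have hsum : ∑ E ∈ P, (ut E x - ut E y) = C * ∑ E ∈ P, (u E x - u E y) := by
    rw [Finset.mul_sum]
    exact Finset.sum_congr rfl hΔ
  have hρ1 := h1.choice_eq hd
  have hρ2 := h2.choice_eq (x := x) (y := y) (by rw [habs]; exact mul_ne_zero hC.ne' hd)
  rw [habs, hsum, mul_div_mul_left _ _ hC.ne', hratio] at hρ2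
  rw [hratio] at hρ1
  exact hρ1.symm.trans hρ2

end Connected

end IsGenL1Rep

theorem stmt_6_general {n : ℕ} (X : Fin n → Type*)
    [∀ i, TopologicalSpace (X i)] [∀ i, ConnectedSpace (X i)]
    (ρ : (∀ i, X i) → (∀ i, X i) → ℝ) (hρ : IsBCR ρ)
    (G Gt : ℝ → ℝ) (P Pt : Finset (Finset (Fin n)))
    (u ut : Finset (Fin n) → (∀ i, X i) → ℝ)
    (h1 : IsGenL1Rep ρ G P u) (h2 : IsGenL1Rep ρ Gt Pt ut) :
    Set.EqOn G Gt (Set.Icc (-1) 1) ∧ P = Pt ∧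
    ∃ C : ℝ, 0 < C ∧ ∃ b : Finset (Fin n) → ℝ,
      ∀ E ∈ P, ∀ x : ∀ i, X i, ut E x = C * u E x + b E := by
  obtain rfl : P = Pt := h1.partition_eq hρ h2
  obtain ⟨C, hC, hslope⟩ := h1.exists_pos_slope h2.dependsOnlyOn fun x y =>
    (h1.sum_sub_nonpos_iff hρ x y).trans (h2.sum_sub_nonpos_iff hρ x y).symm
  let x₀ : ∀ i, X i := Classical.arbitrary _
  refine ⟨h1.eqOn_of_sub_eq_mul_sub h2 hC hslope, rfl, C, hC, fun E => ut E x₀ - C * u E x₀,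
    fun E hE x => ?_⟩
  linarith [hslope E hE x₀ x]

/-- Proposition 6 — identification of the generalized L1-complexity
representation: the partition, G, and the attribute utilities (up to positive affine
transformation) are unique. -/
theorem stmt_6 {n : ℕ} (X : Fin n → Type*)
    [∀ i, TopologicalSpace (X i)] [∀ i, ConnectedSpace (X i)]
    [∀ i, TopologicalSpace.SeparableSpace (X i)]
    (ρ : (∀ i, X i) → (∀ i, X i) → ℝ) (hρ : IsBCR ρ)
    (G Gt : ℝ → ℝ) (P Pt : Finset (Finset (Fin n)))
    (u ut : Finset (Fin n) → (∀ i, X i) → ℝ)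
    (h1 : IsGenL1Rep ρ G P u) (h2 : IsGenL1Rep ρ Gt Pt ut) :
    Set.EqOn G Gt (Set.Icc (-1) 1) ∧ P = Pt ∧
    ∃ C : ℝ, 0 < C ∧ ∃ b : Finset (Fin n) → ℝ,
      ∀ E ∈ P, ∀ x : ∀ i, X i, ut E x = C * u E x + b E :=
  stmt_6_general X ρ hρ G Gt P Pt u ut h1 h2
end

section
/- (i) If a binary choice rule ρ on ℝⁿ has an L1-complexity representation (G, β), then ρ is weakly monotonic: for all x, x', y ∈ ℝⁿ with x' >_D x, ρ(x',y) ≥ ρ(x,y). (ii) If instead ρ has a linear differentiation representation (β, Σ, G) in which at least 2 coordinates of β are nonzero, then ρ is not weakly monotonic: there exist x, x', y ∈ ℝⁿ with x' >_D x such that ρ(x,y) > ρ(x',y). -/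
open Finset

/-- Dominance x >_D y with respect to attribute weights β. -/
def DomB {n : ℕ} (β x y : Fin n → ℝ) : Prop :=
  (∀ k, β k * y k ≤ β k * x k) ∧ ∃ k, β k * y k < β k * x k

/-- L1-complexity representation (G, β). -/
def IsL1Rep {n : ℕ} (ρ : (Fin n → ℝ) → (Fin n → ℝ) → ℝ) (G : ℝ → ℝ)
    (β : Fin n → ℝ) : Prop :=
  (∀ k, β k ≠ 0) ∧
  ContinuousOn G (Set.Icc (-1) 1) ∧
  StrictMonoOn G (Set.Icc (-1) 1) ∧
  (∀ r ∈ Set.Icc (-1:ℝ) 1, G r ∈ Set.Icc (0:ℝ) 1 ∧ G r = 1 - G (-r)) ∧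
  ∀ x y : Fin n → ℝ, x ≠ y →
    ρ x y = G ((∑ k, β k * x k - ∑ k, β k * y k) / ∑ k, |β k * (x k - y k)|)

/-- Linear differentiation representation (β, Σ, G). -/
def IsLDMRep {n : ℕ} (ρ : (Fin n → ℝ) → (Fin n → ℝ) → ℝ) (β : Fin n → ℝ)
    (S : Matrix (Fin n) (Fin n) ℝ) (G : ℝ → ℝ) : Prop :=
  S.PosDef ∧ Continuous G ∧ StrictMono G ∧
  ∀ x y : Fin n → ℝ, x ≠ y →
    ρ x y = G ((∑ k, β k * (x k - y k)) /
      Real.sqrt (∑ i, ∑ j, (x i - y i) * S i j * (x j - y j)))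

/-!
Under an L1-complexity representation, `ρ x y` is `G` of `(∑ u) / (∑ |u|)` with
`u k = β k * (x k - y k)`. This ratio is monotone in `u`: raising one `u k` by `δ ≥ 0` raises the
numerator by `δ` and moves the denominator by at most `δ`.

Under a linear differentiation representation, let `Σ w = β`. Then `βᵀ z = ⟪w, z⟫_Σ`, so by the
strict Cauchy–Schwarz inequality `z ↦ βᵀ z / ‖z‖_Σ` attains its maximum only on the ray through
`w`. Adding `β k` to the `k`-th coordinate of `w` yields an alternative dominating `w`, and it
leaves that ray as soon as `w` has a nonzero coordinate other than `k`; with two nonzero weights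
some such `k` exists. Against `y = 0` the dominating alternative is then chosen strictly less often.
-/

open Finset Matrix

section L1

variable {ι : Type*} [Fintype ι]

-- At `u = 0` the junk value `0 / 0 = 0` matches `ρ x x = 1/2 = G 0`.
noncomputable def l1Ratio (u : ι → ℝ) : ℝ := (∑ i, u i) / ∑ i, |u i|

lemma l1Ratio_mem_Icc (u : ι → ℝ) : l1Ratio u ∈ Set.Icc (-1 : ℝ) 1 := by
  refine abs_le.mp ?_
  rw [l1Ratio, abs_div, abs_of_nonneg (sum_nonneg fun i _ => abs_nonneg (u i))]
  exact div_le_one_of_le₀ (abs_sum_le_sum_abs u univ) (sum_nonneg fun i _ => abs_nonneg (u i))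

lemma l1Ratio_mono : Monotone (l1Ratio (ι := ι)) := by
  intro u v huv
  have hA : ∑ i, |v i| ≤ ∑ i, (|u i| + (v i - u i)) := sum_le_sum fun i _ => by
    have := abs_sub_abs_le_abs_sub (v i) (u i)
    rw [abs_of_nonneg (sub_nonneg.2 (huv i))] at this
    linarith
  have hB : ∑ i, |u i| ≤ ∑ i, (|v i| + (v i - u i)) := sum_le_sum fun i _ => by
    have := abs_sub_abs_le_abs_sub (u i) (v i)
    rw [abs_sub_comm, abs_of_nonneg (sub_nonneg.2 (huv i))] at this
    linarith
  rw [sum_add_distrib, sum_sub_distrib] at hA hB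
  have hUV : ∑ i, u i ≤ ∑ i, v i := sum_le_sum fun i _ => huv i
  have hU := abs_le.mp (abs_sum_le_sum_abs u univ)
  have hV := abs_le.mp (abs_sum_le_sum_abs v univ)
  have hu0 : 0 ≤ ∑ i, |u i| := sum_nonneg fun i _ => abs_nonneg (u i)
  have hv0 : 0 ≤ ∑ i, |v i| := sum_nonneg fun i _ => abs_nonneg (v i)
  unfold l1Ratio
  rcases hu0.eq_or_lt with hu0 | hu0
  · rw [← hu0, div_zero]
    exact div_nonneg (by linarith) hv0
  rcases hv0.eq_or_lt with hv0 | hv0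
  · rw [← hv0, div_zero]
    exact div_nonpos_of_nonpos_of_nonneg (by linarith) hu0.le
  rw [div_le_div_iff₀ hu0 hv0]
  rcases le_total 0 (∑ i, u i) with hs | hs
  · nlinarith
  · nlinarith

end L1

section L1Rep

variable {n : ℕ} {ρ : (Fin n → ℝ) → (Fin n → ℝ) → ℝ} {G : ℝ → ℝ} {β : Fin n → ℝ}

lemma IsL1Rep.apply_eq (h : IsL1Rep ρ G β) (hsym : ∀ x y, ρ x y = 1 - ρ y x) (x y : Fin n → ℝ) :
    ρ x y = G (l1Ratio fun k => β k * x k - β k * y k) := by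
  obtain ⟨-, -, -, hG, hρ⟩ := h
  obtain rfl | hxy := eq_or_ne x y
  · have hG0 := (hG 0 (by norm_num)).2
    rw [neg_zero] at hG0
    simp only [sub_self, l1Ratio, abs_zero, sum_const_zero, div_zero]
    linarith [hsym x x]
  · rw [hρ x y hxy, l1Ratio, ← sum_sub_distrib]
    simp only [mul_sub]

lemma IsL1Rep.le_of_domB (h : IsL1Rep ρ G β) (hsym : ∀ x y, ρ x y = 1 - ρ y x)
    {x x' y : Fin n → ℝ} (hx : DomB β x' x) : ρ x y ≤ ρ x' y := by
  rw [h.apply_eq hsym, h.apply_eq hsym]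
  exact h.2.2.1.monotoneOn (l1Ratio_mem_Icc _) (l1Ratio_mem_Icc _)
    (l1Ratio_mono fun k => by linarith [hx.1 k])

end L1Rep

lemma LinearMap.BilinForm.apply_div_sqrt_lt {M : Type*} [AddCommGroup M] [Module ℝ M]
    (B : LinearMap.BilinForm ℝ M) (hp : ∀ x, x ≠ 0 → 0 < B x x) (hB : B.IsSymm) {w z : M}
    (hwz : LinearIndependent ℝ ![w, z]) :
    B w z / √(B z z) < B w w / √(B w w) := by
  have hw : 0 < B w w := hp w (hwz.ne_zero 0)
  have hz : 0 < B z z := hp z (hwz.ne_zero 1)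
  rw [Real.div_sqrt, div_lt_iff₀ (Real.sqrt_pos.2 hz), ← Real.sqrt_mul hw.le]
  exact Real.lt_sqrt_of_sq_lt
    ((B.apply_sq_lt_iff_linearIndependent_of_symm hp (isSymm_iff.1 hB) w z).2 hwz)

lemma linearIndependent_pair_add_single {K ι : Type*} [Field K] [DecidableEq ι]
    {w : ι → K} {k l : ι} {c : K} (hkl : k ≠ l) (hl : w l ≠ 0) (hc : c ≠ 0) :
    LinearIndependent K ![w, w + Pi.single k c] := by
  rw [LinearIndependent.pair_iff]
  intro s t hst
  have hst_l := congrFun hst l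
  have hst_k := congrFun hst k
  simp only [Pi.add_apply, Pi.smul_apply, smul_eq_mul, Pi.single_eq_same,
    Pi.single_eq_of_ne hkl.symm, add_zero, Pi.zero_apply] at hst_l hst_k
  have hsum : s + t = 0 := by
    have : (s + t) * w l = 0 := by linear_combination hst_l
    exact (mul_eq_zero.mp this).resolve_right hl
  have ht : t = 0 := by
    have : t * c = 0 := by linear_combination hst_k - w k * hsum
    exact (mul_eq_zero.mp this).resolve_right hc
  exact ⟨by linear_combination hsum - ht, ht⟩

lemma domB_add_single {n : ℕ} {β x : Fin n → ℝ} {k : Fin n} (hk : β k ≠ 0) :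
    DomB β (x + Pi.single k (β k)) x := by
  have hk_lt : β k * x k < β k * (x k + β k) := by nlinarith [pow_two_pos_of_ne_zero hk]
  refine ⟨fun l => ?_, k, by simpa using hk_lt⟩
  rcases eq_or_ne l k with rfl | hlk
  · simpa using hk_lt.le
  · simp [hlk]

namespace Matrix

variable {ι : Type*} [Fintype ι] [DecidableEq ι] {S : Matrix ι ι ℝ}

lemma PosDef.toBilin'_pos (hS : S.PosDef) {x : ι → ℝ} (hx : x ≠ 0) : 0 < S.toBilin' x x := by
  simpa [toBilin'_apply'] using hS.dotProduct_mulVec_pos hx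

lemma PosDef.isSymm_toBilin' (hS : S.PosDef) : S.toBilin'.IsSymm :=
  isSymm_toBilin'_iff_isSymm.2 (isHermitian_iff_isSymm.1 hS.isHermitian)

lemma IsSymm.toBilin'_apply_of_mulVec_eq (hS : S.IsSymm) {w β : ι → ℝ} (hw : S *ᵥ w = β)
    (z : ι → ℝ) : S.toBilin' w z = β ⬝ᵥ z := by
  rw [toBilin'_apply', dotProduct_mulVec, ← mulVec_transpose, hS.eq, hw]

end Matrix

section LDM

variable {n : ℕ} {ρ : (Fin n → ℝ) → (Fin n → ℝ) → ℝ} {β : Fin n → ℝ}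
  {S : Matrix (Fin n) (Fin n) ℝ} {G : ℝ → ℝ}

lemma IsLDMRep.apply_zero_eq (h : IsLDMRep ρ β S G) {w z : Fin n → ℝ} (hw : S *ᵥ w = β)
    (hz : z ≠ 0) : ρ z 0 = G (S.toBilin' w z / √(S.toBilin' z z)) := by
  rw [h.2.2.2 z 0 hz, (isHermitian_iff_isSymm.1 h.1.isHermitian).toBilin'_apply_of_mulVec_eq hw,
    toBilin'_apply]
  simp [dotProduct]

lemma IsLDMRep.exists_domB_lt (h : IsLDMRep ρ β S G) (hβ : 2 ≤ #{k | β k ≠ 0}) :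
    ∃ x x' y : Fin n → ℝ, DomB β x' x ∧ ρ x' y < ρ x y := by
  obtain ⟨i, hi, j, hj, hij⟩ := one_lt_card.mp hβ
  rw [mem_filter] at hi hj
  obtain ⟨w, hw⟩ := mulVec_surjective_iff_isUnit.2 h.1.isUnit β
  have hw0 : w ≠ 0 := by
    rintro rfl
    exact hi.2 (by simp [← hw])
  obtain ⟨l, hl⟩ : ∃ l, w l ≠ 0 := Function.ne_iff.mp hw0
  obtain ⟨k, hk, hkl⟩ : ∃ k, β k ≠ 0 ∧ k ≠ l := by
    rcases eq_or_ne i l with rfl | hil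
    · exact ⟨j, hj.2, hij.symm⟩
    · exact ⟨i, hi.2, hil⟩
  have hind := linearIndependent_pair_add_single hkl hl hk
  refine ⟨w, w + Pi.single k (β k), 0, domB_add_single hk, ?_⟩
  have hw' : w + Pi.single k (β k) ≠ 0 := hind.ne_zero 1
  rw [h.apply_zero_eq hw hw', h.apply_zero_eq hw hw0]
  exact h.2.2.1 (S.toBilin'.apply_div_sqrt_lt (fun _ => h.1.toBilin'_pos) h.1.isSymm_toBilin' hind)

end LDM

/-- Proposition 12 — (i) the L1-complexity model is weakly monotonic;
(ii) any linear differentiation model with at least 2 nonzero attribute weights is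
not weakly monotonic. -/
theorem stmt_13 {n : ℕ} :
    (∀ (ρ : (Fin n → ℝ) → (Fin n → ℝ) → ℝ),
      (∀ x y, ρ x y ∈ Set.Icc (0:ℝ) 1) → (∀ x y, ρ x y = 1 - ρ y x) →
      ∀ (G : ℝ → ℝ) (β : Fin n → ℝ), IsL1Rep ρ G β →
        ∀ x x' y : Fin n → ℝ, DomB β x' x → ρ x y ≤ ρ x' y) ∧
    (∀ (ρ : (Fin n → ℝ) → (Fin n → ℝ) → ℝ),
      (∀ x y, ρ x y ∈ Set.Icc (0:ℝ) 1) → (∀ x y, ρ x y = 1 - ρ y x) →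
      ∀ (G : ℝ → ℝ) (β : Fin n → ℝ) (S : Matrix (Fin n) (Fin n) ℝ),
        IsLDMRep ρ β S G →
        2 ≤ (Finset.univ.filter (fun k => β k ≠ 0)).card →
        ∃ x x' y : Fin n → ℝ, DomB β x' x ∧ ρ x' y < ρ x y) :=
  ⟨fun _ _ hsym _ _ h _ _ _ hx => h.le_of_domB hsym hx,
    fun _ _ _ _ _ _ h hβ => h.exists_domB_lt hβ⟩
end
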